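/- Let m ≥ 4, k ∈ {3,…,m−1}, and let B ⊆ {0,1,…,2^m−1} be a set of 3·2^{k−1} consecutive integers. Then every gap of the set φ₂(B) ∪ {0,1} is at most 3/2^{k+1}; that is, whenever t₁ < t₂ are elements of φ₂(B) ∪ {0,1} with no element of φ₂(B) ∪ {0,1} strictly between them, then t₂ − t₁ ≤ 3/2^{k+1}. -/

import Mathlib

/-- The `i`-th digit (1-based) of `n` in base `b`, with the convention that the
`0`-th digit is `0`. -/
def nthDigit (b n i : ℕ) : ℕ := if i = 0 then 0 else n / b ^ (i - 1) % b
/-- The radical-inverse (digit-reversal) function in base `b`, using `m` digits: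
`φ_b(n) = e₁/b + e₂/b² + ⋯ + e_m/b^m`. -/
noncomputable def radInv (b m n : ℕ) : ℝ :=
  ∑ i ∈ Finset.Icc 1 m, (nthDigit b n i : ℝ) / (b : ℝ) ^ i

/-!
Write `φ₂(n) = bitRev m n / 2^m` and `m = (k + 1) + d`. The leading `k + 1` binary digits of
`bitRev m n` are the reversed residue of `n` modulo `2^(k+1)`, so `φ₂(n)` lies in the dyadic cell
of width `2^-(k+1)` indexed by that reversed residue, at an offset depending only on
`n / 2^(k+1)`. A window `(t, t + 3/2^(k+1)]` with `t` in cell `2j` or `2j + 1` contains cell `2j + 2`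
entirely. The block `B` meets every residue class modulo `2^k` and all but `2^(k-1)` classes
modulo `2^(k+1)`; so either `B` hits cell `2j + 2`, or it hits cell `2j + 3` and also cell `2j + 1`,
or it contains two elements of the same `2^(k+1)`-block lying in cells `2j` and `2j + 3` at the
same offset, hence exactly `3/2^(k+1)` apart. In each case some point of `φ₂(B)` is in the window.
-/

def bitRev : ℕ → ℕ → ℕ
  | 0, _ => 0
  | c + 1, n => 2 * bitRev c n + n / 2 ^ c % 2

lemma bitRev_lt (c n : ℕ) : bitRev c n < 2 ^ c := by
  induction c with
  | zero => simp [bitRev]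
  | succ c ih => rw [bitRev, pow_succ]; omega

lemma bitRev_add (c d n : ℕ) : bitRev (c + d) n = 2 ^ d * bitRev c n + bitRev d (n / 2 ^ c) := by
  induction d with
  | zero => simp [bitRev]
  | succ d ih =>
    rw [← add_assoc, bitRev, bitRev, ih, Nat.div_div_eq_div_mul, ← pow_add]
    ring

lemma bitRev_mod (c n : ℕ) : bitRev c (n % 2 ^ c) = bitRev c n := by
  induction c generalizing n with
  | zero => simp [bitRev]
  | succ c ih =>
    have hmod : n % 2 ^ (c + 1) % 2 ^ c = n % 2 ^ c :=
      Nat.mod_mod_of_dvd n (pow_dvd_pow 2 c.le_succ)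
    have hdigit : n % 2 ^ (c + 1) / 2 ^ c = n / 2 ^ c % 2 := by
      rw [pow_succ, Nat.mod_mul_right_div_self]
    rw [bitRev, bitRev, ← ih, hmod, ih, hdigit, Nat.mod_mod]

lemma bitRev_add_two_pow_mul {c r : ℕ} (d q : ℕ) (hr : r < 2 ^ c) :
    bitRev (c + d) (r + 2 ^ c * q) = 2 ^ d * bitRev c r + bitRev d q := by
  rw [bitRev_add, ← bitRev_mod c (r + 2 ^ c * q), Nat.add_mul_mod_self_left, Nat.mod_eq_of_lt hr,
    Nat.add_mul_div_left _ _ (by positivity), Nat.div_eq_of_lt hr, zero_add]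

lemma bitRev_succ_of_lt {c r : ℕ} (hr : r < 2 ^ c) : bitRev (c + 1) r = 2 * bitRev c r := by
  rw [bitRev, Nat.div_eq_of_lt hr]; rfl

lemma bitRev_succ_add_two_pow {c r : ℕ} (hr : r < 2 ^ c) :
    bitRev (c + 1) (r + 2 ^ c) = 2 * bitRev c r + 1 := by
  simpa [bitRev, hr] using bitRev_add_two_pow_mul 1 1 hr

lemma bitRev_bitRev {c n : ℕ} (hn : n < 2 ^ c) : bitRev c (bitRev c n) = n := by
  induction c generalizing n with
  | zero => simp_all [bitRev]
  | succ c ih =>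
    have hb : n / 2 ^ c < 2 := by rwa [Nat.div_lt_iff_lt_mul (by positivity), ← pow_succ']
    have hn' : bitRev (c + 1) n = 2 * bitRev c (n % 2 ^ c) + n / 2 ^ c := by
      rw [bitRev, bitRev_mod, Nat.mod_eq_of_lt hb]
    rw [hn', add_comm c 1, bitRev_add 1 c]
    simp [bitRev, Nat.mul_add_div, Nat.mod_eq_of_lt hb, Nat.div_eq_of_lt hb,
      ih (Nat.mod_lt n (by positivity : 0 < 2 ^ c)), Nat.div_add_mod]

lemma bitRev_succ_le (c j : ℕ) : bitRev (c + 1) (j + 1) ≤ bitRev (c + 1) j + 2 ^ c := by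
  rw [add_comm c 1, bitRev_add, bitRev_add]
  simp only [bitRev, pow_one, pow_zero, Nat.div_one, mul_zero, zero_add]
  rcases Nat.mod_two_eq_zero_or_one j with h | h
  · rw [h, show (j + 1) % 2 = 1 by omega, show (j + 1) / 2 = j / 2 by omega]
    omega
  · rw [h, show (j + 1) % 2 = 0 by omega]
    have := bitRev_lt c ((j + 1) / 2)
    omega

lemma radInv_two_eq (m n : ℕ) : radInv 2 m n = bitRev m n / 2 ^ m := by
  induction m with
  | zero => simp [radInv, bitRev]
  | succ m ih =>
    rw [radInv, Finset.sum_Icc_succ_top (by omega), ← radInv, ih, bitRev, nthDigit]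
    push_cast
    field_simp
    ring

lemma radInv_two_lt_one (m n : ℕ) : radInv 2 m n < 1 := by
  rw [radInv_two_eq, div_lt_one (by positivity)]
  exact_mod_cast bitRev_lt m n

lemma exists_mem_Ico_mod_eq (a : ℕ) {N r : ℕ} (hr : r < N) :
    ∃ n ∈ Set.Ico a (a + N), n % N = r := by
  have hq := Nat.div_add_mod a N
  have hlt := Nat.mod_lt a (hr.trans_le' (Nat.zero_le r))
  by_cases h : a % N ≤ r
  · exact ⟨N * (a / N) + r, ⟨by omega, by omega⟩, by rw [Nat.mul_add_mod, Nat.mod_eq_of_lt hr]⟩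
  · refine ⟨N * (a / N + 1) + r, ⟨by rw [mul_add]; omega, by rw [mul_add]; omega⟩, ?_⟩
    rw [Nat.mul_add_mod, Nat.mod_eq_of_lt hr]

lemma consecutive_residue_cases (e a : ℕ) {r₀ r₁ : ℕ} (hr₀ : r₀ < 2 ^ (e + 1)) (hr₁ : r₁ < 2 ^ (e + 1))
    (hstep : r₁ ≤ r₀ + 2 ^ e) :
    let B := Set.Ico a (a + 3 * 2 ^ e)
    (∃ q, r₁ + 2 ^ (e + 2) * q ∈ B) ∨
      (∃ q, r₁ + 2 ^ (e + 1) + 2 ^ (e + 2) * q ∈ B) ∧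
        ((∃ q, r₀ + 2 ^ (e + 1) + 2 ^ (e + 2) * q ∈ B) ∨
          ∃ q, r₀ + 2 ^ (e + 2) * q ∈ B ∧ r₁ + 2 ^ (e + 1) + 2 ^ (e + 2) * q ∈ B) := by
  intro B
  have h2N : 2 ^ (e + 2) = 2 ^ (e + 1) * 2 := pow_succ 2 (e + 1)
  have h3 : 3 * 2 ^ e = 2 ^ (e + 1) + 2 ^ e := by rw [pow_succ]; ring
  have hfirst : ∀ r < 2 ^ (e + 1), ∃ q, ∃ b < 2, r + 2 ^ (e + 1) * b + 2 ^ (e + 2) * q ∈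
      Set.Ico a (a + 2 ^ (e + 1)) := by
    intro r hr
    obtain ⟨n, hn, hmod⟩ := exists_mem_Ico_mod_eq a hr
    refine ⟨n / 2 ^ (e + 2), n / 2 ^ (e + 1) % 2, Nat.mod_lt _ two_pos, ?_⟩
    rwa [← hmod, ← Nat.mod_mul, ← h2N, Nat.mod_add_div]
  have hB : Set.Ico a (a + 2 ^ (e + 1)) ⊆ B := Set.Ico_subset_Ico_right (by omega)
  by_cases h₁ : ∃ q, r₁ + 2 ^ (e + 2) * q ∈ B
  · exact Or.inl h₁
  push Not at h₁
  refine Or.inr ⟨?_, ?_⟩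
  · obtain ⟨q, b, hb, hq⟩ := hfirst r₁ hr₁
    interval_cases b
    · exact absurd (hB (by simpa using hq)) (h₁ q)
    · exact ⟨q, hB (by simpa using hq)⟩
  by_cases h₀ : ∃ q, r₀ + 2 ^ (e + 1) + 2 ^ (e + 2) * q ∈ B
  · exact Or.inl h₀
  obtain ⟨q, b, hb, hq⟩ := hfirst r₀ hr₀
  interval_cases b
  · simp only [mul_zero, add_zero, Set.mem_Ico] at hq
    refine Or.inr ⟨q, hB hq, by omega, ?_⟩
    by_contra hout
    exact h₁ q ⟨by omega, by omega⟩
  · exact absurd ⟨q, hB (by simpa using hq)⟩ h₀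

lemma exists_bitRev_mem_Ioc (e d a x : ℕ) (hx : x + 3 * 2 ^ d ≤ 2 ^ (e + 2 + d)) :
    ∃ n ∈ Set.Ico a (a + 3 * 2 ^ e), bitRev (e + 2 + d) n ∈ Set.Ioc x (x + 3 * 2 ^ d) := by
  have h2N : 2 ^ (e + 2) = 2 * 2 ^ (e + 1) := by ring
  have hlo := Nat.div_mul_le_self x (2 ^ (d + 1))
  have hhi := Nat.lt_mul_div_succ x (by positivity : 0 < 2 ^ (d + 1))
  set j := x / 2 ^ (d + 1)
  rw [pow_succ] at hlo hhi
  have hj : j + 1 < 2 ^ (e + 1) := by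
    have : 2 ^ d * (2 * j + 3) ≤ 2 ^ d * 2 ^ (e + 2) := by rw [← pow_add, add_comm d]; linarith
    have := Nat.le_of_mul_le_mul_left this (by positivity)
    omega
  set r₀ := bitRev (e + 1) j
  set r₁ := bitRev (e + 1) (j + 1)
  have hr₀ : r₀ < 2 ^ (e + 1) := bitRev_lt _ _
  have hr₁ : r₁ < 2 ^ (e + 1) := bitRev_lt _ _
  have c₀ : bitRev (e + 2) r₀ = 2 * j := by rw [bitRev_succ_of_lt hr₀, bitRev_bitRev (by omega)]
  have c₁ : bitRev (e + 2) (r₀ + 2 ^ (e + 1)) = 2 * j + 1 := by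
    rw [bitRev_succ_add_two_pow hr₀, bitRev_bitRev (by omega)]
  have c₂ : bitRev (e + 2) r₁ = 2 * j + 2 := by rw [bitRev_succ_of_lt hr₁, bitRev_bitRev hj]; ring
  have c₃ : bitRev (e + 2) (r₁ + 2 ^ (e + 1)) = 2 * j + 3 := by
    rw [bitRev_succ_add_two_pow hr₁, bitRev_bitRev hj]; ring
  rcases consecutive_residue_cases e a hr₀ hr₁ (bitRev_succ_le e j) with
    ⟨q, hq⟩ | ⟨⟨q₃, hq₃⟩, ⟨q₁, hq₁⟩ | ⟨q, hq₀, hq₃⟩⟩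
  · have v := bitRev_add_two_pow_mul d q (by omega : r₁ < 2 ^ (e + 2))
    have := bitRev_lt d q
    rw [c₂] at v
    exact ⟨_, hq, by linarith, by linarith⟩
  · have v₁ := bitRev_add_two_pow_mul d q₁ (by omega : r₀ + 2 ^ (e + 1) < 2 ^ (e + 2))
    have v₃ := bitRev_add_two_pow_mul d q₃ (by omega : r₁ + 2 ^ (e + 1) < 2 ^ (e + 2))
    have := bitRev_lt d q₁
    have := bitRev_lt d q₃
    rw [c₁] at v₁
    rw [c₃] at v₃
    by_cases hx₁ : x < bitRev (e + 2 + d) (r₀ + 2 ^ (e + 1) + 2 ^ (e + 2) * q₁)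
    · exact ⟨_, hq₁, hx₁, by linarith⟩
    · exact ⟨_, hq₃, by linarith, by linarith⟩
  · have v₀ := bitRev_add_two_pow_mul d q (by omega : r₀ < 2 ^ (e + 2))
    have v₃ := bitRev_add_two_pow_mul d q (by omega : r₁ + 2 ^ (e + 1) < 2 ^ (e + 2))
    have := bitRev_lt d q
    rw [c₀] at v₀
    rw [c₃] at v₃
    by_cases hx₀ : x < bitRev (e + 2 + d) (r₀ + 2 ^ (e + 2) * q)
    · exact ⟨_, hq₀, hx₀, by linarith⟩
    · exact ⟨_, hq₃, by linarith, by linarith⟩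

lemma exists_radInv_mem_Ioc (e d a x : ℕ) (hx : (x : ℝ) / 2 ^ (e + 2 + d) + 3 / 2 ^ (e + 2) ≤ 1) :
    ∃ n ∈ Set.Ico a (a + 3 * 2 ^ e), radInv 2 (e + 2 + d) n ∈
      Set.Ioc ((x : ℝ) / 2 ^ (e + 2 + d)) (x / 2 ^ (e + 2 + d) + 3 / 2 ^ (e + 2)) := by
  have hδ : (3 : ℝ) / 2 ^ (e + 2) = ((3 * 2 ^ d : ℕ) : ℝ) / 2 ^ (e + 2 + d) := by
    rw [pow_add _ (e + 2) d]; push_cast; field_simp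
  rw [hδ, ← add_div, div_le_one (by positivity)] at hx
  obtain ⟨n, hn, hlo, hhi⟩ := exists_bitRev_mem_Ioc e d a x (by exact_mod_cast hx)
  refine ⟨n, hn, ?_, ?_⟩ <;> rw [radInv_two_eq]
  · gcongr
  · rw [hδ, ← add_div]
    gcongr
    exact_mod_cast hhi

lemma gap_le_of_exists_mem_Ioc {S : Set ℝ} {b δ : ℝ} (hS : ∀ t ∈ S, t ≤ b)
    (hcover : ∀ t ∈ S, t + δ < b → ∃ s ∈ S, s ∈ Set.Ioc t (t + δ)) :
    ∀ t₁ ∈ S, ∀ t₂ ∈ S, t₁ < t₂ → (∀ t ∈ S, ¬(t₁ < t ∧ t < t₂)) → t₂ - t₁ ≤ δ := by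
  intro t₁ h₁ t₂ h₂ _ hgap
  by_contra! hlong
  obtain ⟨s, hs, hs₁, hs₂⟩ := hcover t₁ h₁ (by linarith [hS t₂ h₂])
  exact hgap s hs ⟨hs₁, by linarith⟩

theorem radInv_gap_B_general (m k a : ℕ) (hk1 : 3 ≤ k) (hkm : k ≤ m - 1) (S : Set ℝ)
    (hS : S = {0, 1} ∪ (fun n => radInv 2 m n) '' {n : ℕ | a ≤ n ∧ n < a + 3 * 2 ^ (k - 1)}) :
    ∀ t₁ ∈ S, ∀ t₂ ∈ S, t₁ < t₂ → (∀ t ∈ S, ¬(t₁ < t ∧ t < t₂)) →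
      t₂ - t₁ ≤ 3 / (2 : ℝ) ^ (k + 1) := by
  obtain ⟨e, rfl⟩ : ∃ e, k = e + 1 := ⟨k - 1, by omega⟩
  obtain ⟨d, rfl⟩ : ∃ d, m = e + 2 + d := ⟨m - (e + 2), by omega⟩
  rw [Nat.add_sub_cancel] at hS
  have hgrid : ∀ t ∈ S, t < 1 → ∃ x : ℕ, t = x / 2 ^ (e + 2 + d) := by
    rw [hS]
    rintro t ((rfl | rfl) | ⟨n, -, rfl⟩) ht
    · exact ⟨0, by simp⟩
    · exact absurd ht (lt_irrefl 1)
    · exact ⟨_, radInv_two_eq _ n⟩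
  refine gap_le_of_exists_mem_Ioc (b := 1) ?_ ?_
  · rw [hS]
    rintro t ((rfl | rfl) | ⟨n, -, rfl⟩)
    · exact zero_le_one
    · exact le_rfl
    · exact (radInv_two_lt_one _ n).le
  · intro t ht hδ
    obtain ⟨x, rfl⟩ := hgrid t ht (by linarith [show (0 : ℝ) < 3 / 2 ^ (e + 1 + 1) by positivity])
    obtain ⟨n, hn, hI⟩ := exists_radInv_mem_Ioc e d a x hδ.le
    exact ⟨_, hS ▸ Or.inr ⟨n, hn, rfl⟩, hI⟩

/-- For a set `B` of `3·2^{k−1}` consecutive integers in `{0,…,2^m−1}` with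
`k ∈ {3,…,m−1}`, every gap of `φ₂(B) ∪ {0,1}` is at most `3/2^{k+1}`. -/
theorem radInv_gap_B (m k a : ℕ) (hm : 4 ≤ m) (hk1 : 3 ≤ k) (hkm : k ≤ m - 1)
    (ha : a + 3 * 2 ^ (k - 1) ≤ 2 ^ m) (S : Set ℝ)
    (hS : S = {0, 1} ∪ (fun n => radInv 2 m n) '' {n : ℕ | a ≤ n ∧ n < a + 3 * 2 ^ (k - 1)}) :
    ∀ t₁ ∈ S, ∀ t₂ ∈ S, t₁ < t₂ → (∀ t ∈ S, ¬(t₁ < t ∧ t < t₂)) →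
      t₂ - t₁ ≤ 3 / (2 : ℝ) ^ (k + 1) :=
  radInv_gap_B_general m k a hk1 hkm S hS
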